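/- Let φ be a matter density and for α ∈ [0,1] let θ_α denote the unique smooth, everywhere positive solution of θ_α^α·Δθ_α = −4πκ·φ on ℝ³ with θ_α(x) → 1 as |x| → ∞ satisfying the decay conditions at level 1. Then for all 0 ≤ α ≤ β ≤ 1 and all x ∈ ℝ³ one has 1 ≤ θ_1(x) ≤ θ_β(x) ≤ θ_α(x) ≤ θ_0(x). -/

import Mathlib

open MeasureTheory Filter Metric Set

noncomputable section

abbrev E3 : Type := EuclideanSpace ℝ (Fin 3)

/-- The Euclidean Laplacian on `ℝ³`. -/
def lap (u : E3 → ℝ) (x : E3) : ℝ :=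
  ∑ i : Fin 3, fderiv ℝ (fun y => fderiv ℝ u y (EuclideanSpace.single i 1)) x
    (EuclideanSpace.single i 1)

/-- `u` satisfies the decay conditions at level `b`: for every (order of a) multi-index `k`
there is a constant `C` such that `|∂^l (u - b)| ≤ C · |x| ^ (-1 - k)` for all large `|x|`. -/
def DecayAt (b : ℝ) (u : E3 → ℝ) : Prop :=
  ∀ k : ℕ, ∃ C R : ℝ, ∀ x : E3, R ≤ ‖x‖ →
    ‖iteratedFDeriv ℝ k (fun y => u y - b) x‖ ≤ C * ‖x‖ ^ (-1 - (k : ℝ))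

/-- A matter density: smooth, compactly supported, nonnegative, not identically zero. -/
def IsMatterDensity (φ : E3 → ℝ) : Prop :=
  ContDiff ℝ (⊤ : ℕ∞) φ ∧ HasCompactSupport φ ∧ (∀ x, 0 ≤ φ x) ∧ φ ≠ 0


/-- `θ` solves the Generalized Poisson Problem with interactivity parameter `α` and
asymptotic boundary value `1`. -/
def IsGPPSol (κ α : ℝ) (φ θ : E3 → ℝ) : Prop :=
  ContDiff ℝ (⊤ : ℕ∞) θ ∧ (∀ x, 0 < θ x) ∧
    (∀ x, θ x ^ α * lap θ x = -(4 * Real.pi * κ) * φ x) ∧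
    Tendsto θ (cocompact E3) (nhds 1)

/-!
Everything follows from a minimum principle on `ℝ³`: a `C²` function `w` vanishing at infinity
that is nonnegative wherever `Δw > 0` is nonnegative everywhere. Indeed, if `w` were negative
somewhere, `w - ε‖x‖²` would attain an interior minimum on a large ball, where its Laplacian
`Δw - 6ε` is nonnegative. Since `Δθ_α ≤ 0`, this gives `θ_α ≥ 1`. For `α ≤ β`, at a point where
`Δ(θ_α - θ_β) > 0` the two equations force `θ_β ^ β < θ_α ^ α`, and since `θ_β ≥ 1` this gives
`θ_β ^ α ≤ θ_β ^ β < θ_α ^ α`, hence `θ_β ≤ θ_α`.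
-/
open Topology

theorem IsLocalMin.deriv_deriv_nonneg {g : ℝ → ℝ} {a : ℝ} (hmin : IsLocalMin g a)
    (hc : ContinuousAt g a) : 0 ≤ deriv (deriv g) a := by
  by_contra! hneg
  -- A negative second derivative would make `a` also a local maximum, so `g` is locally constant.
  have hmax := isLocalMax_of_deriv_deriv_neg hneg hmin.deriv_eq_zero hc
  have hconst : g =ᶠ[𝓝 a] fun _ => g a :=
    (hmin.and hmax).mono fun _ hx => le_antisymm hx.2 hx.1
  have hderiv : deriv g =ᶠ[𝓝 a] fun _ => 0 :=
    hconst.eventuallyEq_nhds.mono fun _ hx => by rw [hx.deriv_eq, deriv_const]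
  rw [hderiv.deriv_eq, deriv_const] at hneg
  exact hneg.false

section SecondDerivative

variable {E : Type*} [NormedAddCommGroup E] [NormedSpace ℝ E] {f : E → ℝ}

theorem ContDiff.differentiable_fderiv_apply (hf : ContDiff ℝ 2 f) (v : E) :
    Differentiable ℝ fun y => fderiv ℝ f y v :=
  ((hf.fderiv_right (m := 1) le_rfl).clm_apply contDiff_const).differentiable one_ne_zero

theorem IsLocalMin.fderiv_fderiv_apply_nonneg (hf : ContDiff ℝ 2 f) {x : E} (hmin : IsLocalMin f x)
    (v : E) : 0 ≤ fderiv ℝ (fun y => fderiv ℝ f y v) x v := by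
  have hline : ∀ t : ℝ, HasDerivAt (fun s : ℝ => x + s • v) v t := fun t => by
    simpa using ((hasDerivAt_id t).smul_const v).const_add x
  have hfd : Differentiable ℝ f := hf.differentiable two_ne_zero
  have hderiv : ∀ t : ℝ, HasDerivAt (fun s : ℝ => f (x + s • v)) (fderiv ℝ f (x + t • v) v) t :=
    fun t => (hfd _).hasFDerivAt.comp_hasDerivAt t (hline t)
  have hderiv2 : HasDerivAt (deriv fun s : ℝ => f (x + s • v))
      (fderiv ℝ (fun y => fderiv ℝ f y v) x v) 0 := by
    rw [funext fun t => (hderiv t).deriv]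
    have := (hf.differentiable_fderiv_apply v (x + (0 : ℝ) • v)).hasFDerivAt.comp_hasDerivAt 0
      (hline 0)
    rwa [zero_smul, add_zero] at this
  have hmin' : IsLocalMin (fun s : ℝ => f (x + s • v)) 0 :=
    IsLocalMin.comp_continuous (g := fun s : ℝ => x + s • v) (by simpa using hmin)
      (hline 0).continuousAt
  exact hderiv2.deriv ▸ hmin'.deriv_deriv_nonneg (hderiv 0).continuousAt

end SecondDerivative

theorem lap_const (c : ℝ) (x : E3) : lap (fun _ => c) x = 0 := by
  simp [lap]

theorem lap_sub {u v : E3 → ℝ} (hu : ContDiff ℝ 2 u) (hv : ContDiff ℝ 2 v) (x : E3) :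
    lap (fun y => u y - v y) x = lap u x - lap v x := by
  simp only [lap, ← Finset.sum_sub_distrib]
  refine Finset.sum_congr rfl fun i _ => ?_
  set e : E3 := EuclideanSpace.single i 1
  have hfd : (fun y => fderiv ℝ (fun z => u z - v z) y e) =
      fun y => fderiv ℝ u y e - fderiv ℝ v y e :=
    funext fun y => by
      rw [fderiv_fun_sub (hu.differentiable two_ne_zero y) (hv.differentiable two_ne_zero y)]
      rfl
  rw [hfd, fderiv_fun_sub (hu.differentiable_fderiv_apply _ x) (hv.differentiable_fderiv_apply _ x)]
  rfl

theorem lap_const_mul_norm_sq (c : ℝ) (x : E3) : lap (fun y => c * ‖y‖ ^ 2) x = 6 * c := by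
  have hdiag : ∀ e : E3,
      fderiv ℝ (fun y => fderiv ℝ (fun z => c * ‖z‖ ^ 2) y e) x e = 2 * c * ‖e‖ ^ 2 := by
    intro e
    have hfd : (fun y => fderiv ℝ (fun z => c * ‖z‖ ^ 2) y e) = fun y => 2 * c * innerSL ℝ e y :=
      funext fun y => by
        rw [((hasStrictFDerivAt_norm_sq y).hasFDerivAt.const_mul c).fderiv]
        simp [real_inner_comm]
        ring
    rw [hfd, ((innerSL ℝ e).hasFDerivAt.const_mul (2 * c)).fderiv]
    simp
  simp only [lap, hdiag, PiLp.norm_single, norm_one, Fin.sum_univ_three]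
  ring

theorem lap_nonneg_of_isLocalMin {f : E3 → ℝ} (hf : ContDiff ℝ 2 f) {x : E3}
    (hmin : IsLocalMin f x) : 0 ≤ lap f x :=
  Finset.sum_nonneg fun _ _ => hmin.fderiv_fderiv_apply_nonneg hf _

theorem nonneg_of_lap_pos_imp_nonneg {w : E3 → ℝ} (hw : ContDiff ℝ 2 w)
    (hlim : Tendsto w (cocompact E3) (𝓝 0)) (hpos : ∀ x, 0 < lap w x → 0 ≤ w x) (x₀ : E3) :
    0 ≤ w x₀ := by
  by_contra! hneg
  obtain ⟨δ, hδpos, hwx₀⟩ : ∃ δ > 0, w x₀ = -(2 * δ) := ⟨-w x₀ / 2, by linarith, by ring⟩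
  obtain ⟨R₀, -, hR₀⟩ := (hasBasis_cobounded_norm.tendsto_iff Metric.nhds_basis_ball).mp
    (Metric.cobounded_eq_cocompact (α := E3) ▸ hlim) δ hδpos
  set R := max R₀ (‖x₀‖ + 1)
  have hR : 0 < R := lt_max_of_lt_right (by positivity)
  -- Subtracting `ε ‖y‖²` makes the Laplacian strictly larger than that of `w`, while costing at
  -- most `δ` on the ball of radius `R`.
  set ε := δ / R ^ 2
  have hεR : ε * R ^ 2 = δ := div_mul_cancel₀ δ (by positivity)
  set v : E3 → ℝ := fun y => w y - ε * ‖y‖ ^ 2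
  have hv : ContDiff ℝ 2 v := hw.sub (contDiff_const.mul (contDiff_norm_sq ℝ))
  have hx₀ : x₀ ∈ closedBall (0 : E3) R :=
    mem_closedBall_zero_iff.mpr ((le_max_right _ _).trans' (by linarith))
  have hvx₀ : v x₀ ≤ -(2 * δ) := by
    have : 0 ≤ ε * ‖x₀‖ ^ 2 := by positivity
    simp only [v]
    linarith
  have hsphere : ∀ y ∈ closedBall (0 : E3) R \ ball 0 R, v x₀ < v y := by
    rintro y ⟨hy, hy'⟩
    have hyR : ‖y‖ = R :=
      le_antisymm (mem_closedBall_zero_iff.mp hy) (not_lt.mp (by simpa using hy'))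
    have hwy := abs_lt.mp (by simpa using hR₀ y (show R₀ ≤ ‖y‖ from hyR ▸ le_max_left _ _))
    simp only [v, hyR, hεR]
    linarith
  obtain ⟨x, hx, hmin⟩ := (isCompact_closedBall (0 : E3) R).exists_isMinOn_mem_subset
    hv.continuous.continuousOn hx₀ hsphere
  have hlap : 0 < lap w x := by
    have := lap_nonneg_of_isLocalMin hv (hmin.isLocalMin (Metric.closedBall_mem_nhds_of_mem hx))
    rw [lap_sub hw (contDiff_const.mul (contDiff_norm_sq ℝ)), lap_const_mul_norm_sq] at this
    linarith [show 0 < ε by positivity]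
  have hεx : ε * ‖x‖ ^ 2 ≤ δ :=
    hεR ▸ by gcongr; exact (mem_ball_zero_iff.mp hx).le
  have : v x ≤ v x₀ := hmin hx₀
  simp only [v] at this hvx₀
  linarith [hpos x hlap]

theorem le_of_lap_nonpos {u : E3 → ℝ} {c : ℝ} (hu : ContDiff ℝ 2 u)
    (hlim : Tendsto u (cocompact E3) (𝓝 c)) (hlap : ∀ x, lap u x ≤ 0) (x : E3) : c ≤ u x :=
  sub_nonneg.mp <| nonneg_of_lap_pos_imp_nonneg (hu.sub contDiff_const)
    (by simpa using hlim.sub_const c)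
    (fun y hy => by
      rw [lap_sub hu contDiff_const, lap_const, sub_zero] at hy
      exact absurd (hlap y) hy.not_ge) x

namespace IsGPPSol

variable {κ α β : ℝ} {φ u v : E3 → ℝ}

theorem contDiff_two (hu : IsGPPSol κ α φ u) : ContDiff ℝ 2 u :=
  hu.1.of_le (WithTop.coe_le_coe.mpr le_top)

theorem lap_nonpos (hu : IsGPPSol κ α φ u) (hκ : 0 ≤ κ) (hφ : ∀ x, 0 ≤ φ x) (x : E3) :
    lap u x ≤ 0 := by
  have hsrc : -(4 * Real.pi * κ) * φ x ≤ 0 :=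
    mul_nonpos_of_nonpos_of_nonneg (by have := Real.pi_pos; nlinarith) (hφ x)
  exact nonpos_of_mul_nonpos_right (hu.2.2.1 x ▸ hsrc) (Real.rpow_pos_of_pos (hu.2.1 x) α)

theorem one_le (hu : IsGPPSol κ α φ u) (hκ : 0 ≤ κ) (hφ : ∀ x, 0 ≤ φ x) (x : E3) : 1 ≤ u x :=
  le_of_lap_nonpos hu.contDiff_two hu.2.2.2 (hu.lap_nonpos hκ hφ) x

theorem le_of_exponent_le (hu : IsGPPSol κ α φ u) (hv : IsGPPSol κ β φ v) (hκ : 0 ≤ κ)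
    (hφ : ∀ x, 0 ≤ φ x) (hα : 0 ≤ α) (hαβ : α ≤ β) (x : E3) : v x ≤ u x := by
  refine sub_nonneg.mp <| nonneg_of_lap_pos_imp_nonneg (hu.contDiff_two.sub hv.contDiff_two)
    (by simpa using hu.2.2.2.sub hv.2.2.2) (fun y hy => ?_) x
  rw [lap_sub hu.contDiff_two hv.contDiff_two, sub_pos] at hy
  have hupos := Real.rpow_pos_of_pos (hu.2.1 y) α
  have hsrc : v y ^ β * lap v y = u y ^ α * lap u y := (hv.2.2.1 y).trans (hu.2.2.1 y).symm
  have hlapv : lap v y < 0 := hy.trans_le (hu.lap_nonpos hκ hφ y)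
  have hpow : v y ^ β < u y ^ α := by
    by_contra! hle
    nlinarith [mul_lt_mul_of_pos_left hy hupos,
      mul_nonpos_of_nonneg_of_nonpos (sub_nonneg.mpr hle) hlapv.le]
  have hmono : v y ^ α ≤ v y ^ β := Real.rpow_le_rpow_of_exponent_le (hv.one_le hκ hφ y) hαβ
  by_contra! hlt
  have := Real.rpow_le_rpow (hu.2.1 y).le (sub_neg.mp hlt).le hα
  linarith

end IsGPPSol

theorem gpp_monotonicity_in_alpha (κ : ℝ) (hκ : 0 < κ)
    (φ : E3 → ℝ) (hφ : IsMatterDensity φ) (θ : ℝ → E3 → ℝ)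
    (hθ : ∀ α ∈ Icc (0 : ℝ) 1, IsGPPSol κ α φ (θ α) ∧ DecayAt 1 (θ α)) :
    ∀ α β : ℝ, 0 ≤ α → α ≤ β → β ≤ 1 → ∀ x : E3,
      1 ≤ θ 1 x ∧ θ 1 x ≤ θ β x ∧ θ β x ≤ θ α x ∧ θ α x ≤ θ 0 x := by
  intro α β hα hαβ hβ x
  have hsol : ∀ γ ∈ Icc (0 : ℝ) 1, IsGPPSol κ γ φ (θ γ) := fun γ hγ => (hθ γ hγ).1
  have h₀ := hsol 0 ⟨le_rfl, zero_le_one⟩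
  have h₁ := hsol 1 ⟨zero_le_one, le_rfl⟩
  have hα' := hsol α ⟨hα, hαβ.trans hβ⟩
  have hβ' := hsol β ⟨hα.trans hαβ, hβ⟩
  have hφ₀ := hφ.2.2.1
  exact ⟨h₁.one_le hκ.le hφ₀ x,
    hβ'.le_of_exponent_le h₁ hκ.le hφ₀ (hα.trans hαβ) hβ x,
    hα'.le_of_exponent_le hβ' hκ.le hφ₀ hα hαβ x,
    h₀.le_of_exponent_le hα' hκ.le hφ₀ le_rfl hα x⟩
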